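/- The value function V₀ satisfies the optimality equation V₀(π) = min{h(π), c(1-π₀) + (TV₀)(π)} for every π ∈ S^M. -/
import Mathlib


open MeasureTheory Filter

/-- `D_i(π,x)`. -/
noncomputable def Dcoef {E : Type*} {M : ℕ} (p : ℝ) (ν : Fin (M + 1) → ℝ)
    (f : Fin (M + 1) → E → ℝ) (π : Fin (M + 1) → ℝ) (x : E) (i : Fin (M + 1)) : ℝ :=
  if i = 0 then (1 - p) * π 0 * f 0 x else (π i + π 0 * p * ν i) * f i x

/-- `D(π,x) = Σ_{i=0}^M D_i(π,x)`. -/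
noncomputable def Dtot {E : Type*} {M : ℕ} (p : ℝ) (ν : Fin (M + 1) → ℝ)
    (f : Fin (M + 1) → E → ℝ) (π : Fin (M + 1) → ℝ) (x : E) : ℝ :=
  ∑ i : Fin (M + 1), Dcoef p ν f π x i

/-- The Markov transition operator `T`:
`(Tg)(π) = ∫_E m(dx) D(π,x) g(D₀(π,x)/D(π,x), …, D_M(π,x)/D(π,x))`. -/
noncomputable def Toper {E : Type*} [MeasurableSpace E] (m : Measure E) {M : ℕ}
    (p : ℝ) (ν : Fin (M + 1) → ℝ) (f : Fin (M + 1) → E → ℝ)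
    (g : (Fin (M + 1) → ℝ) → ℝ) (π : Fin (M + 1) → ℝ) : ℝ :=
  ∫ x, Dtot p ν f π x * g (fun i => Dcoef p ν f π x i / Dtot p ν f π x) ∂m

/-- `h_j(π) = Σ_{i=0}^M π_i a_{ij}`. -/
def hj {M : ℕ} (a : Fin (M + 1) → Fin (M + 1) → ℝ) (j : Fin (M + 1))
    (π : Fin (M + 1) → ℝ) : ℝ :=
  ∑ i : Fin (M + 1), π i * a i j

/-- `h(π) = min_{j ∈ {1,…,M}} h_j(π)`. -/
noncomputable def hfun {M : ℕ} (a : Fin (M + 1) → Fin (M + 1) → ℝ)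
    (π : Fin (M + 1) → ℝ) : ℝ :=
  ⨅ j : {j : Fin (M + 1) // j ≠ 0}, hj a (j : Fin (M + 1)) π

/-- The operator `M`: `(Mf)(π) = min{h(π), c(1-π₀) + (Tf)(π)}`, with `T` the
Markov transition operator of the posterior process. -/
noncomputable def Mop {E : Type*} [MeasurableSpace E] (m : Measure E) {M : ℕ}
    (p : ℝ) (ν : Fin (M + 1) → ℝ) (f : Fin (M + 1) → E → ℝ)
    (a : Fin (M + 1) → Fin (M + 1) → ℝ) (c : ℝ)
    (g : (Fin (M + 1) → ℝ) → ℝ) (π : Fin (M + 1) → ℝ) : ℝ :=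
  min (hfun a π) (c * (1 - π 0) + Toper m p ν f g π)

section OptAux

variable {E : Type*} [MeasurableSpace E] {M : ℕ}

private lemma measurable_Dcoef (p : ℝ) (ν : Fin (M + 1) → ℝ) (f : Fin (M + 1) → E → ℝ)
    (hf : ∀ i, Measurable (f i)) (i : Fin (M + 1)) :
    Measurable (fun q : (Fin (M + 1) → ℝ) × E => Dcoef p ν f q.1 q.2 i) := by
  unfold Dcoef
  by_cases h : i = 0
  · simp only [if_pos h]
    exact ((measurable_const.mul ((measurable_pi_apply 0).comp measurable_fst)).mul
      ((hf 0).comp measurable_snd))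
  · simp only [if_neg h]
    exact (((measurable_pi_apply i).comp measurable_fst).add
      ((((measurable_pi_apply 0).comp measurable_fst).mul measurable_const).mul
        measurable_const)).mul ((hf i).comp measurable_snd)

private lemma measurable_Dtot (p : ℝ) (ν : Fin (M + 1) → ℝ) (f : Fin (M + 1) → E → ℝ)
    (hf : ∀ i, Measurable (f i)) :
    Measurable (fun q : (Fin (M + 1) → ℝ) × E => Dtot p ν f q.1 q.2) := by
  unfold Dtot
  exact Finset.measurable_sum _ fun i _ => measurable_Dcoef p ν f hf i

private lemma measurable_integrand (p : ℝ) (ν : Fin (M + 1) → ℝ) (f : Fin (M + 1) → E → ℝ)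
    (hf : ∀ i, Measurable (f i)) {g : (Fin (M + 1) → ℝ) → ℝ} (hg : Measurable g) :
    Measurable (fun q : (Fin (M + 1) → ℝ) × E =>
      Dtot p ν f q.1 q.2 * g (fun i => Dcoef p ν f q.1 q.2 i / Dtot p ν f q.1 q.2)) :=
  (measurable_Dtot p ν f hf).mul (hg.comp (measurable_pi_lambda _ fun i =>
    (measurable_Dcoef p ν f hf i).div (measurable_Dtot p ν f hf)))

private lemma continuous_hj (a : Fin (M + 1) → Fin (M + 1) → ℝ) (j : Fin (M + 1)) :
    Continuous (hj a j) := by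
  unfold hj
  exact continuous_finset_sum _ fun i _ => (continuous_apply i).mul continuous_const

private lemma measurable_hfun (a : Fin (M + 1) → Fin (M + 1) → ℝ)
    (hne : Nonempty {j : Fin (M + 1) // j ≠ 0}) : Measurable (hfun a) := by
  have h : hfun a = fun π => Finset.univ.inf' Finset.univ_nonempty
      (fun j : {j : Fin (M + 1) // j ≠ 0} => hj a (j : Fin (M + 1)) π) := by
    funext π
    rw [Finset.inf'_univ_eq_ciInf]
    rfl
  rw [h]
  exact (Continuous.finset_inf'_apply (f := fun (j : {j : Fin (M + 1) // j ≠ 0}) π =>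
    hj a (j : Fin (M + 1)) π) Finset.univ_nonempty
    (fun j _ => continuous_hj a (j : Fin (M + 1)))).measurable

private lemma measurable_Mop (m : Measure E) [SFinite m]
    (p : ℝ) (ν : Fin (M + 1) → ℝ) (f : Fin (M + 1) → E → ℝ)
    (hf : ∀ i, Measurable (f i)) (a : Fin (M + 1) → Fin (M + 1) → ℝ) (c : ℝ)
    (hne : Nonempty {j : Fin (M + 1) // j ≠ 0})
    {g : (Fin (M + 1) → ℝ) → ℝ} (hg : Measurable g) :
    Measurable (Mop m p ν f a c g) := by
  have hT : Measurable (Toper m p ν f g) := by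
    have hΦ := (measurable_integrand p ν f hf hg).stronglyMeasurable
    exact hΦ.integral_prod_right'.measurable
  unfold Mop
  exact (measurable_hfun a hne).min
    ((measurable_const.mul (measurable_const.sub (measurable_pi_apply 0))).add hT)

end OptAux

set_option maxHeartbeats 1000000 in
/-- the value function `V₀ = lim_N Mᴺh` satisfies the optimality
equation `V₀(π) = min{h(π), c(1-π₀) + (TV₀)(π)}` on `S^M`. -/
theorem optimality_equation
    {E : Type*} [MeasurableSpace E] (m : Measure E) [SigmaFinite m]
    {M : ℕ} (hM : 0 < M)
    (p : ℝ) (hp : p ∈ Set.Ioo (0 : ℝ) 1)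
    (ν : Fin (M + 1) → ℝ) (hν0 : ν 0 = 0) (hνpos : ∀ i : Fin (M + 1), i ≠ 0 → 0 < ν i)
    (hνsum : ∑ i : Fin (M + 1), ν i = 1)
    (f : Fin (M + 1) → E → ℝ) (hfmeas : ∀ i, Measurable (f i))
    (hfnonneg : ∀ i x, 0 ≤ f i x)
    (hfint : ∀ i, ∫⁻ x, ENNReal.ofReal (f i x) ∂m = 1)
    (c : ℝ) (hc : 0 < c)
    (a : Fin (M + 1) → Fin (M + 1) → ℝ)
    (ha : ∀ (i j : Fin (M + 1)), j ≠ 0 → 0 ≤ a i j)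
    (haii : ∀ j : Fin (M + 1), j ≠ 0 → a j j = 0)
    (V0 : (Fin (M + 1) → ℝ) → ℝ)
    (hV0 : ∀ π ∈ stdSimplex ℝ (Fin (M + 1)),
      Tendsto (fun N : ℕ => (Mop m p ν f a c)^[N] (hfun a) π) atTop (nhds (V0 π))) :
    ∀ π ∈ stdSimplex ℝ (Fin (M + 1)),
      V0 π = min (hfun a π) (c * (1 - π 0) + Toper m p ν f V0 π) := by
  -- basic setup
  have h1ne : (1 : Fin (M + 1)) ≠ 0 := by
    intro h
    have := congrArg Fin.val h
    simp [Fin.val_one', Nat.mod_eq_of_lt (show 1 < M + 1 by omega)] at this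
  haveI hne : Nonempty {j : Fin (M + 1) // j ≠ 0} := ⟨⟨1, h1ne⟩⟩
  set j₀ : {j : Fin (M + 1) // j ≠ 0} := ⟨1, h1ne⟩ with hj₀
  set C : ℝ := ∑ i : Fin (M + 1), |a i (j₀ : Fin (M + 1))| with hC
  set g : ℕ → (Fin (M + 1) → ℝ) → ℝ := fun N => (Mop m p ν f a c)^[N] (hfun a) with hgdef
  -- simplex facts
  have hle1 : ∀ π' ∈ stdSimplex ℝ (Fin (M + 1)), ∀ i, π' i ≤ 1 := by
    intro π' hπ' i
    calc π' i ≤ ∑ j : Fin (M + 1), π' j :=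
          Finset.single_le_sum (fun j _ => hπ'.1 j) (Finset.mem_univ i)
      _ = 1 := hπ'.2
  have hDco : ∀ π' ∈ stdSimplex ℝ (Fin (M + 1)), ∀ (x : E) (i), 0 ≤ Dcoef p ν f π' x i := by
    intro π' hπ' x i
    unfold Dcoef
    split_ifs with h
    · exact mul_nonneg (mul_nonneg (by linarith [hp.2]) (hπ'.1 0)) (hfnonneg 0 x)
    · exact mul_nonneg (add_nonneg (hπ'.1 i)
        (mul_nonneg (mul_nonneg (hπ'.1 0) hp.1.le) (hνpos i h).le)) (hfnonneg i x)
  have hDnn : ∀ π' ∈ stdSimplex ℝ (Fin (M + 1)), ∀ x : E, 0 ≤ Dtot p ν f π' x := by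
    intro π' hπ' x
    exact Finset.sum_nonneg fun i _ => hDco π' hπ' x i
  have hratio : ∀ π' ∈ stdSimplex ℝ (Fin (M + 1)), ∀ x : E, Dtot p ν f π' x ≠ 0 →
      (fun i => Dcoef p ν f π' x i / Dtot p ν f π' x) ∈ stdSimplex ℝ (Fin (M + 1)) := by
    intro π' hπ' x hx
    constructor
    · intro i
      exact div_nonneg (hDco π' hπ' x i) (hDnn π' hπ' x)
    · rw [← Finset.sum_div]
      have : ∑ i : Fin (M + 1), Dcoef p ν f π' x i = Dtot p ν f π' x := rfl
      rw [this]
      exact div_self hx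
  -- hfun bounds on the simplex
  have hCnn : 0 ≤ C := Finset.sum_nonneg fun i _ => abs_nonneg _
  have hhf_nn : ∀ π' ∈ stdSimplex ℝ (Fin (M + 1)), 0 ≤ hfun a π' := by
    intro π' hπ'
    exact le_ciInf fun j => Finset.sum_nonneg fun i _ => mul_nonneg (hπ'.1 i) (ha i j j.2)
  have hhf_le : ∀ π' ∈ stdSimplex ℝ (Fin (M + 1)), hfun a π' ≤ C := by
    intro π' hπ'
    have h1 : hfun a π' ≤ hj a (j₀ : Fin (M + 1)) π' :=
      ciInf_le (Set.Finite.bddBelow (Set.finite_range _)) j₀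
    refine h1.trans (Finset.sum_le_sum fun i _ => ?_)
    calc π' i * a i (j₀ : Fin (M + 1)) ≤ |π' i * a i (j₀ : Fin (M + 1))| := le_abs_self _
      _ = π' i * |a i (j₀ : Fin (M + 1))| := by rw [abs_mul, abs_of_nonneg (hπ'.1 i)]
      _ ≤ 1 * |a i (j₀ : Fin (M + 1))| :=
          mul_le_mul_of_nonneg_right (hle1 π' hπ' i) (abs_nonneg _)
      _ = |a i (j₀ : Fin (M + 1))| := one_mul _
  -- measurability of iterates
  have hgmeas : ∀ N, Measurable (g N) := by
    intro N
    induction N with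
    | zero => exact measurable_hfun a hne
    | succ N ih =>
        show Measurable ((Mop m p ν f a c)^[N + 1] (hfun a))
        rw [Function.iterate_succ_apply']
        exact measurable_Mop m p ν f hfmeas a c hne ih
  -- bounds on iterates
  have hbounds : ∀ N, ∀ π' ∈ stdSimplex ℝ (Fin (M + 1)), 0 ≤ g N π' ∧ g N π' ≤ C := by
    intro N
    induction N with
    | zero => exact fun π' hπ' => ⟨hhf_nn π' hπ', hhf_le π' hπ'⟩
    | succ N ih =>
        intro π' hπ'
        have hit : g (N + 1) π' = Mop m p ν f a c (g N) π' := by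
          show (Mop m p ν f a c)^[N + 1] (hfun a) π' = _
          rw [Function.iterate_succ_apply']
        rw [hit]
        unfold Mop
        constructor
        · refine le_min (hhf_nn π' hπ') (add_nonneg
            (mul_nonneg hc.le (by linarith [hle1 π' hπ' 0])) ?_)
          unfold Toper
          apply integral_nonneg
          intro x
          by_cases hx : Dtot p ν f π' x = 0
          · simp [hx]
          · exact mul_nonneg (hDnn π' hπ' x) ((ih _ (hratio π' hπ' x hx)).1)
        · exact le_trans (min_le_left _ _) (hhf_le π' hπ')
  -- main argument
  intro π hπ
  -- integrability of the dominating function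
  have hfInt : ∀ i, Integrable (f i) m := by
    intro i
    refine ⟨(hfmeas i).aestronglyMeasurable, ?_⟩
    rw [hasFiniteIntegral_iff_ofReal (Eventually.of_forall (hfnonneg i)), hfint i]
    exact ENNReal.one_lt_top
  have hDint : Integrable (fun x => Dtot p ν f π x) m := by
    unfold Dtot Dcoef
    apply integrable_finset_sum
    intro i _
    by_cases h : i = 0
    · simp only [if_pos h]
      exact (hfInt 0).const_mul _
    · simp only [if_neg h]
      exact (hfInt i).const_mul _
  -- dominated convergence for Toper
  set r : E → Fin (M + 1) → ℝ := fun x i => Dcoef p ν f π x i / Dtot p ν f π x with hr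
  have hF_meas : ∀ N, AEStronglyMeasurable
      (fun x => Dtot p ν f π x * g N (r x)) m := by
    intro N
    have hΦ := measurable_integrand p ν f hfmeas (hgmeas N)
    exact (hΦ.comp (measurable_prodMk_left (x := π))).aestronglyMeasurable
  have hbound_int : Integrable (fun x => C * Dtot p ν f π x) m := hDint.const_mul C
  have h_bound : ∀ N, ∀ᵐ x ∂m, ‖Dtot p ν f π x * g N (r x)‖ ≤ C * Dtot p ν f π x := by
    intro N
    refine Eventually.of_forall fun x => ?_
    by_cases hx : Dtot p ν f π x = 0
    · simp [hx, mul_nonneg hCnn]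
    · have hmem := hratio π hπ x hx
      have hb := hbounds N _ hmem
      rw [Real.norm_eq_abs, abs_of_nonneg (mul_nonneg (hDnn π hπ x) hb.1), mul_comm C]
      exact mul_le_mul_of_nonneg_left hb.2 (hDnn π hπ x)
  have h_lim : ∀ᵐ x ∂m, Tendsto (fun N => Dtot p ν f π x * g N (r x)) atTop
      (nhds (Dtot p ν f π x * V0 (r x))) := by
    refine Eventually.of_forall fun x => ?_
    by_cases hx : Dtot p ν f π x = 0
    · simp only [hx, zero_mul]
      exact tendsto_const_nhds
    · exact (hV0 _ (hratio π hπ x hx)).const_mul _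
  have hT : Tendsto (fun N => Toper m p ν f (g N) π) atTop
      (nhds (Toper m p ν f V0 π)) := by
    unfold Toper
    exact tendsto_integral_of_dominated_convergence _ hF_meas hbound_int h_bound h_lim
  have h1 : Tendsto (fun N => Mop m p ν f a c (g N) π) atTop
      (nhds (min (hfun a π) (c * (1 - π 0) + Toper m p ν f V0 π))) := by
    unfold Mop
    exact Filter.Tendsto.min tendsto_const_nhds (hT.const_add _)
  have h2 : Tendsto (fun N => Mop m p ν f a c (g N) π) atTop (nhds (V0 π)) := by
    have h3 := (hV0 π hπ).comp (tendsto_add_atTop_nat 1)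
    have heq : (fun N => Mop m p ν f a c (g N) π)
        = fun N => (Mop m p ν f a c)^[N + 1] (hfun a) π := by
      funext N
      rw [Function.iterate_succ_apply']
    rw [heq]
    exact h3
  exact tendsto_nhds_unique h2 h1
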